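/- Let ρ be an n-qubit state (a 2ⁿ×2ⁿ positive semidefinite complex matrix of trace 1, indexed by 𝔽₂ⁿ), let m ≥ 1, let ε₁, …, ε_m ≥ 0, and let S₁, …, S_m ⊆ 𝔽₂^{2n} be subspaces satisfying (1/|Sᵢ|) Σ_{x ∈ Sᵢ} (tr(ρ W_x))² ≥ 1 − εᵢ for every i. Then the subspace S = S₁ + S₂ + … + S_m satisfies (1/|S|) Σ_{x ∈ S} (tr(ρ W_x))² ≥ 1 − Σ_{i=1}^{m} εᵢ. -/

import Mathlib

open ComplexOrder

/-- The field with two elements. -/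
abbrev F2 := ZMod 2

/-- The phase space `V = 𝔽₂ⁿ × 𝔽₂ⁿ`. -/
abbrev V (n : ℕ) : Type := (Fin n → F2) × (Fin n → F2)

/-- The Weyl operator `W_v` with entries
`(W_v)_{x,y} = i^{vₓ·v_z} (−1)^{v_z·y} 1{x = y + vₓ}`. -/
noncomputable def Weyl {n : ℕ} (v : V n) : Matrix (Fin n → F2) (Fin n → F2) ℂ :=
  fun x y =>
    Complex.I ^ (∑ i, (v.1 i).val * (v.2 i).val) *
      (-1 : ℂ) ^ (∑ i, (v.2 i) * (y i)).val *
      (if x = y + v.1 then 1 else 0)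

/-- The average squared Pauli weight
`(1/|S|) Σ_{x ∈ S} (tr(ρ W_x))²` of a subspace `S ⊆ 𝔽₂^{2n}`;
since `ρ` and `W_x` are Hermitian, `tr(ρ W_x)` is real and we take its real part. -/
noncomputable def avgWeight {n : ℕ} (ρ : Matrix (Fin n → F2) (Fin n → F2) ℂ)
    (S : Submodule F2 (V n)) : ℝ :=
  (Nat.card S : ℝ)⁻¹ *
    ∑ᶠ x ∈ (S : Set (V n)), ((Matrix.trace (ρ * Weyl x)).re) ^ 2

/-! The operators `G v = W_v ⊗ W_vᵀ` form a character of `𝔽₂^{2n}`: the phases of `W_u W_v` and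
`W_v W_u` relative to `W_{u+v}` are inverse to each other. Hence the averages
`P S = |S|⁻¹ ∑_{v ∈ S} G v` are commuting Hermitian projections with `P S * P T = P (S + T)`.
With `τ = ρ ⊗ ρᵀ` one has `tr(τ G v) = tr(ρ W_v)²`, so the average weight of `S` is `tr(τ P S)`.
Since `(1 - P S) (1 - P T)` is again a projection, `tr(τ (1 - P S) (1 - P T)) ≥ 0`, that is
`tr(τ P S) + tr(τ P T) - 1 ≤ tr(τ P (S + T))`, and the theorem follows by induction on `m`. -/

theorem AddMonoidHom.card_nsmul_sum_comp_of_surjective {A B X : Type*} [AddGroup A] [AddGroup B]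
    [Fintype A] [Fintype B] [AddCommMonoid X] (φ : A →+ B) (hφ : Function.Surjective φ)
    (f : B → X) : Fintype.card B • ∑ a, f (φ a) = Fintype.card A • ∑ b, f b := by
  -- by surjectivity, translating by `b` in `B` is translating by a preimage of `b` in `A`
  have hshift (b : B) : ∑ a, f (b + φ a) = ∑ a, f (φ a) := by
    obtain ⟨a₀, rfl⟩ := hφ b
    simp only [← map_add]
    exact Fintype.sum_equiv (Equiv.addLeft a₀) _ _ fun _ ↦ rfl
  calc Fintype.card B • ∑ a, f (φ a) = ∑ b, ∑ a, f (b + φ a) := by simp [hshift]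
    _ = ∑ a, ∑ b, f (b + φ a) := Finset.sum_comm
    _ = Fintype.card A • ∑ b, f b := by
      simp [fun a ↦ Fintype.sum_equiv (Equiv.addRight (φ a)) (fun b ↦ f (b + φ a)) f fun _ ↦ rfl]

namespace AddChar

variable {𝕜 R M A : Type*} [Field 𝕜] [Ring R] [AddCommGroup M] [Module R M] [Ring A] [Algebra 𝕜 A]

variable (𝕜) in
noncomputable def subspaceAvg (ψ : AddChar M A) (S : Submodule R M) : A :=
  (Nat.card S : 𝕜)⁻¹ • ∑ᶠ x : S, ψ x

variable (ψ : AddChar M A)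

@[simp]
lemma subspaceAvg_bot : subspaceAvg 𝕜 ψ (⊥ : Submodule R M) = 1 := by
  simp only [subspaceAvg, Nat.card_unique, Nat.cast_one, inv_one, finsum_unique, one_smul]
  exact ψ.map_zero_eq_one

variable [CharZero 𝕜] [Finite M]

lemma subspaceAvg_mul_subspaceAvg (S T : Submodule R M) :
    subspaceAvg 𝕜 ψ S * subspaceAvg 𝕜 ψ T = subspaceAvg 𝕜 ψ (S ⊔ T) := by
  classical
  have := Fintype.ofFinite M
  let add : S × T →+ ↥(S ⊔ T) :=
    { toFun p := ⟨p.1 + p.2, Submodule.add_mem_sup p.1.2 p.2.2⟩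
      map_zero' := by ext; simp
      map_add' p q := by ext; simp only [Prod.fst_add, Prod.snd_add, Submodule.coe_add]; abel }
  have hadd : Function.Surjective add := by
    rintro ⟨z, hz⟩
    obtain ⟨s, hs, t, ht, rfl⟩ := Submodule.mem_sup.1 hz
    exact ⟨(⟨s, hs⟩, ⟨t, ht⟩), rfl⟩
  have hsum := add.card_nsmul_sum_comp_of_surjective hadd (fun z ↦ ψ z)
  simp only [add, AddMonoidHom.coe_mk, ZeroHom.coe_mk, map_add_eq_mul, Fintype.card_prod,
    ← Nat.cast_smul_eq_nsmul 𝕜, Nat.cast_mul] at hsum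
  have hcard (U : Submodule R M) : (Fintype.card U : 𝕜) ≠ 0 :=
    Nat.cast_ne_zero.2 Fintype.card_ne_zero
  simp only [subspaceAvg, finsum_eq_sum_of_fintype, Nat.card_eq_fintype_card]
  rw [smul_mul_smul_comm, Finset.sum_mul_sum, ← Fintype.sum_prod_type',
    ← inv_smul_smul₀ (hcard (S ⊔ T)) (∑ p : S × T, _), hsum, smul_smul, smul_smul]
  congr 1
  have := hcard S
  have := hcard T
  field_simp

lemma commute_subspaceAvg (S T : Submodule R M) :
    Commute (subspaceAvg 𝕜 ψ S) (subspaceAvg 𝕜 ψ T) := by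
  rw [Commute, SemiconjBy, subspaceAvg_mul_subspaceAvg, subspaceAvg_mul_subspaceAvg, sup_comm]

lemma isStarProjection_subspaceAvg [StarRing 𝕜] [StarRing A] [StarModule 𝕜 A]
    (hψ : ∀ x, IsSelfAdjoint (ψ x)) (S : Submodule R M) :
    IsStarProjection (subspaceAvg 𝕜 ψ S) where
  isIdempotentElem := by rw [IsIdempotentElem, subspaceAvg_mul_subspaceAvg, sup_idem]
  isSelfAdjoint := by
    classical
    have := Fintype.ofFinite M
    simp only [IsSelfAdjoint, subspaceAvg, finsum_eq_sum_of_fintype, star_smul, star_sum,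
      (hψ _).star_eq, star_inv₀, star_natCast]

end AddChar

namespace Matrix

variable {ι R : Type*} [Fintype ι] [CommRing R] [PartialOrder R] [StarRing R] [StarOrderedRing R]

lemma PosSemidef.trace_mul_nonneg_of_isStarProjection {τ p : Matrix ι ι R} (hτ : τ.PosSemidef)
    (hp : IsStarProjection p) : 0 ≤ (τ * p).trace := by
  rw [← hp.isIdempotentElem.eq, ← mul_assoc, trace_mul_comm, ← mul_assoc]
  nth_rw 1 [← hp.isSelfAdjoint.star_eq]
  exact (hτ.conjTranspose_mul_mul_same p).trace_nonneg

lemma PosSemidef.trace_mul_add_trace_mul_le [DecidableEq ι] {τ p q : Matrix ι ι R}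
    (hτ : τ.PosSemidef) (hp : IsStarProjection p) (hq : IsStarProjection q) (hpq : Commute p q) :
    (τ * p).trace + (τ * q).trace ≤ τ.trace + (τ * (p * q)).trace := by
  have hcomm : Commute (1 - p) (1 - q) :=
    (Commute.one_right _).sub_right ((Commute.one_left q).sub_left hpq)
  have h := hτ.trace_mul_nonneg_of_isStarProjection (hp.one_sub.mul hq.one_sub hcomm)
  rw [one_sub_mul, mul_one_sub, mul_sub, mul_sub, mul_sub, mul_one, trace_sub, trace_sub,
    trace_sub] at h
  rw [← sub_nonneg]
  convert h using 1
  ring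

end Matrix

namespace AddChar

variable {ι κ R M : Type*} [Fintype ι] [DecidableEq ι] [Ring R] [AddCommGroup M] [Module R M]
  [Finite M]

theorem one_sub_sum_le_re_trace_mul_subspaceAvg_biSup {τ : Matrix ι ι ℂ} (hτ : τ.PosSemidef)
    (hτ1 : τ.trace = 1) (ψ : AddChar M (Matrix ι ι ℂ)) (hψ : ∀ x, IsSelfAdjoint (ψ x))
    (S : κ → Submodule R M) (ε : κ → ℝ)
    (h : ∀ i, 1 - ε i ≤ (τ * ψ.subspaceAvg ℂ (S i)).trace.re) (t : Finset κ) :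
    1 - ∑ i ∈ t, ε i ≤ (τ * ψ.subspaceAvg ℂ (⨆ i ∈ t, S i)).trace.re := by
  classical
  induction t using Finset.induction_on with
  | empty => simp [hτ1]
  | insert a t ha ih =>
    have hstep := hτ.trace_mul_add_trace_mul_le (ψ.isStarProjection_subspaceAvg (𝕜 := ℂ) hψ (S a))
      (ψ.isStarProjection_subspaceAvg (𝕜 := ℂ) hψ (⨆ i ∈ t, S i)) (ψ.commute_subspaceAvg _ _)
    rw [ψ.subspaceAvg_mul_subspaceAvg, hτ1, Complex.le_def] at hstep
    simp only [Complex.add_re, Complex.one_re] at hstep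
    rw [Finset.sum_insert ha, Finset.iSup_insert]
    linarith [h a, hstep.1]

end AddChar

open Matrix


section Weyl

variable {n : ℕ}

lemma neg_one_pow_val_natCast (a : ℕ) : (-1 : ℂ) ^ (a : F2).val = (-1) ^ a := by
  rw [ZMod.val_natCast, ← neg_one_pow_eq_pow_mod_two]

lemma neg_one_pow_val_add (s t : F2) :
    (-1 : ℂ) ^ (s + t).val = (-1) ^ s.val * (-1) ^ t.val := by
  rw [← pow_add, ← neg_one_pow_val_natCast (s.val + t.val), Nat.cast_add]
  simp only [ZMod.natCast_val, ZMod.cast_id', id]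

def weylExponent (v : V n) : ℕ := ∑ i, (v.1 i).val * (v.2 i).val

lemma weyl_apply (v : V n) (x y : Fin n → F2) :
    Weyl v x y = Complex.I ^ weylExponent v * (-1) ^ (v.2 ⬝ᵥ y).val *
      if x = y + v.1 then 1 else 0 := rfl

lemma neg_one_pow_weylExponent (v : V n) :
    (-1 : ℂ) ^ weylExponent v = (-1) ^ (v.2 ⬝ᵥ v.1).val := by
  rw [← neg_one_pow_val_natCast, weylExponent, dotProduct]
  push_cast
  simp only [ZMod.natCast_val, ZMod.cast_id', id, mul_comm]

lemma I_pow_mul_self (k : ℕ) : Complex.I ^ k * Complex.I ^ k = (-1) ^ k := by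
  rw [← mul_pow, Complex.I_mul_I]

lemma weyl_zero : Weyl (0 : V n) = 1 := by
  ext x y
  simp [weyl_apply, weylExponent, one_apply]

noncomputable def weylCocycle (u v : V n) : ℂ :=
  Complex.I ^ weylExponent u * Complex.I ^ weylExponent v * (-1) ^ (u.2 ⬝ᵥ v.1).val /
    Complex.I ^ weylExponent (u + v)

lemma weyl_mul_weyl (u v : V n) : Weyl u * Weyl v = weylCocycle u v • Weyl (u + v) := by
  ext x y
  rw [mul_apply, Finset.sum_eq_single (y + v.1) (fun z _ hz ↦ by simp [weyl_apply, hz])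
    (by simp), Matrix.smul_apply, weyl_apply, weyl_apply, weyl_apply (u + v)]
  simp only [↓reduceIte, mul_one, Prod.fst_add, Prod.snd_add, dotProduct_add, add_dotProduct,
    neg_one_pow_val_add, ← add_assoc, add_right_comm y v.1 u.1, weylCocycle, smul_eq_mul]
  field_simp

lemma weylCocycle_self (v : V n) : weylCocycle v v = 1 := by
  have h0 : weylExponent (0 : V n) = 0 := by simp [weylExponent]
  rw [weylCocycle, ZModModule.add_self, h0, pow_zero, div_one, I_pow_mul_self,
    neg_one_pow_weylExponent, ← neg_one_pow_val_add, ZModModule.add_self,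
    ZMod.val_zero, pow_zero]

lemma weyl_mul_self (v : V n) : Weyl v * Weyl v = 1 := by
  rw [weyl_mul_weyl, weylCocycle_self, one_smul, ZModModule.add_self, weyl_zero]

lemma weylCocycle_mul_weylCocycle_swap (u v : V n) : weylCocycle u v * weylCocycle v u = 1 := by
  have h : Weyl u * Weyl v * (Weyl v * Weyl u) = 1 := by
    rw [mul_assoc, ← mul_assoc (Weyl v), weyl_mul_self, one_mul, weyl_mul_self]
  rw [weyl_mul_weyl, weyl_mul_weyl, add_comm v u, smul_mul_smul_comm, weyl_mul_self] at h
  simpa using congrFun (congrFun h 0) 0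

lemma isHermitian_weyl (v : V n) : (Weyl v).IsHermitian := by
  ext x y
  have hxy : y = x + v.1 ↔ x = y + v.1 := by
    constructor <;> rintro rfl <;> rw [add_assoc, ZModModule.add_self, add_zero]
  rw [conjTranspose_apply, weyl_apply, weyl_apply]
  by_cases h : x = y + v.1
  · rw [if_pos (hxy.2 h), if_pos h, h, dotProduct_add, neg_one_pow_val_add,
      ← neg_one_pow_weylExponent]
    simp only [mul_one, star_mul', star_pow, Complex.conj_I, star_neg, star_one, RCLike.star_def]
    have hk : (-1 : ℂ) ^ weylExponent v * (-1) ^ weylExponent v = 1 := by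
      rw [← mul_pow]; norm_num
    rw [neg_pow]
    linear_combination (Complex.I ^ weylExponent v * (-1) ^ (v.2 ⬝ᵥ y).val) * hk
  · simp [h, hxy]

end Weyl

open scoped Kronecker

noncomputable def doubledWeyl (n : ℕ) : AddChar (V n) (Matrix (V n) (V n) ℂ) where
  toFun v := Weyl v ⊗ₖ (Weyl v)ᵀ
  map_zero_eq_one' := by rw [weyl_zero, transpose_one, one_kronecker_one]
  map_add_eq_mul' u v := by
    rw [← mul_kronecker_mul, ← transpose_mul, weyl_mul_weyl, weyl_mul_weyl, add_comm v u,
      transpose_smul, smul_kronecker, kronecker_smul, smul_smul,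
      weylCocycle_mul_weylCocycle_swap, one_smul]

lemma doubledWeyl_apply {n : ℕ} (v : V n) : doubledWeyl n v = Weyl v ⊗ₖ (Weyl v)ᵀ := rfl

lemma isSelfAdjoint_doubledWeyl {n : ℕ} (v : V n) : IsSelfAdjoint (doubledWeyl n v) := by
  rw [doubledWeyl_apply, IsSelfAdjoint, star_eq_conjTranspose, conjTranspose_kronecker,
    conjTranspose_transpose_eq_transpose_conjTranspose, (isHermitian_weyl v).eq]

lemma trace_kronecker_transpose_mul_doubledWeyl {n : ℕ} (ρ : Matrix (Fin n → F2) (Fin n → F2) ℂ)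
    (v : V n) : ((ρ ⊗ₖ ρᵀ) * doubledWeyl n v).trace = (ρ * Weyl v).trace ^ 2 := by
  rw [doubledWeyl_apply, ← mul_kronecker_mul, trace_kronecker, ← transpose_mul, trace_transpose,
    trace_mul_comm (Weyl v), sq]

lemma avgWeight_eq_re_trace {n : ℕ} {ρ : Matrix (Fin n → F2) (Fin n → F2) ℂ}
    (hρ : ρ.IsHermitian) (S : Submodule F2 (V n)) :
    avgWeight ρ S = ((ρ ⊗ₖ ρᵀ) * (doubledWeyl n).subspaceAvg ℂ S).trace.re := by
  classical
  have hreal (v : V n) : (((ρ * Weyl v).trace.re ^ 2 : ℝ) : ℂ) = (ρ * Weyl v).trace ^ 2 := by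
    rw [Complex.ofReal_pow, Complex.conj_eq_iff_re.1]
    rw [← Complex.star_def, ← trace_conjTranspose, conjTranspose_mul, hρ.eq,
      (isHermitian_weyl v).eq, trace_mul_comm]
  rw [avgWeight, AddChar.subspaceAvg, ← finsum_set_coe_eq_finsum_mem, finsum_eq_sum_of_fintype,
    finsum_eq_sum_of_fintype, mul_smul_comm, trace_smul, Matrix.mul_sum, trace_sum, smul_eq_mul]
  simp_rw [trace_kronecker_transpose_mul_doubledWeyl, ← hreal]
  rw [← Complex.ofReal_sum, ← Complex.ofReal_natCast, ← Complex.ofReal_inv, Complex.re_ofReal_mul,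
    Complex.ofReal_re]
  rfl

theorem stmt19_general (n m : ℕ)
    (ρ : Matrix (Fin n → F2) (Fin n → F2) ℂ)
    (hpsd : ρ.PosSemidef) (htr : ρ.trace = 1)
    (ε : Fin m → ℝ)
    (S : Fin m → Submodule F2 (V n))
    (h : ∀ i, 1 - ε i ≤ avgWeight ρ (S i)) :
    1 - ∑ i, ε i ≤ avgWeight ρ (⨆ i, S i) := by
  simp only [avgWeight_eq_re_trace hpsd.isHermitian] at h ⊢
  have hτ1 : (ρ ⊗ₖ ρᵀ).trace = 1 := by rw [trace_kronecker, trace_transpose, htr, one_mul]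
  simpa using (doubledWeyl n).one_sub_sum_le_re_trace_mul_subspaceAvg_biSup
    (hpsd.kronecker hpsd.transpose) hτ1 isSelfAdjoint_doubledWeyl S ε h Finset.univ

/-- For an `n`-qubit state `ρ` (PSD, trace 1), `m ≥ 1`, `ε₁, …, ε_m ≥ 0` and
subspaces `S₁, …, S_m ⊆ 𝔽₂^{2n}` with
`(1/|Sᵢ|) Σ_{x ∈ Sᵢ} (tr(ρ W_x))² ≥ 1 − εᵢ` for all `i`, the sum
`S = S₁ + ⋯ + S_m` satisfies `(1/|S|) Σ_{x ∈ S} (tr(ρ W_x))² ≥ 1 − Σᵢ εᵢ`. -/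
theorem stmt19 (n m : ℕ) (hm : 1 ≤ m)
    (ρ : Matrix (Fin n → F2) (Fin n → F2) ℂ)
    (hpsd : ρ.PosSemidef) (htr : ρ.trace = 1)
    (ε : Fin m → ℝ) (hε : ∀ i, 0 ≤ ε i)
    (S : Fin m → Submodule F2 (V n))
    (h : ∀ i, 1 - ε i ≤ avgWeight ρ (S i)) :
    1 - ∑ i, ε i ≤ avgWeight ρ (⨆ i, S i) :=
  stmt19_general n m ρ hpsd htr ε S h
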